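/- arXiv:1804.05694 — 2 statements merged into one kernel-verified Lean document; each statement's English description precedes it below -/
import Mathlib

section
/- For all η ∈ ℝ, τ > 0, ξ ≠ 0 and positive integers β with βξ < 1/2, the function g_{β,η,τ,ξ} satisfies lim_{h → 0+} g_{β,η,τ,ξ}(h) = Σ_{k1=0}^{β} Σ_{k2=0}^{β} B_{k1,k2,β,η,τ,ξ} Γ(1 − ξ(2β − k1 − k2)) = g_{β,η,τ,ξ}(0), and g_{β,η,τ,ξ} is continuous on [0,∞). -/
open MeasureTheory

noncomputable def nPdf (x : ℝ) : ℝ := Real.exp (-(x ^ 2) / 2) / Real.sqrt (2 * Real.pi)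

noncomputable def nCdf (x : ℝ) : ℝ := ∫ t in Set.Iic x, nPdf t

noncomputable def C1 (θ h : ℝ) : ℝ :=
  nCdf (h / 2 + Real.log θ / h) + (1 / θ) * nCdf (h / 2 - Real.log θ / h)

noncomputable def C2 (θ h : ℝ) : ℝ :=
  (nCdf (h / 2 + Real.log θ / h) + (1 / h) * nPdf (h / 2 + Real.log θ / h)
      - (1 / (h * θ)) * nPdf (h / 2 - Real.log θ / h))
    * ((1 / θ ^ 2) * nCdf (h / 2 - Real.log θ / h)
      + (1 / (h * θ ^ 2)) * nPdf (h / 2 - Real.log θ / h)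
      - (1 / (h * θ)) * nPdf (h / 2 + Real.log θ / h))

noncomputable def C3 (θ h : ℝ) : ℝ :=
  (1 / (h ^ 2 * θ)) * (h / 2 - Real.log θ / h) * nPdf (h / 2 + Real.log θ / h)
    + (1 / (h ^ 2 * θ ^ 2)) * (h / 2 + Real.log θ / h) * nPdf (h / 2 - Real.log θ / h)

noncomputable def gs (β1 β2 h : ℝ) : ℝ :=
  if h = 0 then Real.Gamma (1 - β1 - β2)
  else ∫ θ in Set.Ioi (0 : ℝ),
    θ ^ β2 * (C2 θ h * C1 θ h ^ (β1 + β2 - 2) * Real.Gamma (2 - β1 - β2)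
      + C3 θ h * C1 θ h ^ (β1 + β2 - 1) * Real.Gamma (1 - β1 - β2))

noncomputable def Bcoef (β k1 k2 : ℕ) (η τ ξ : ℝ) : ℝ :=
  (β.choose k1 : ℝ) * (β.choose k2 : ℝ) * (η - τ / ξ) ^ (k1 + k2) * (τ / ξ) ^ (2 * β - (k1 + k2))

noncomputable def gfull (β : ℕ) (η τ ξ : ℝ) (h : ℝ) : ℝ :=
  ∑ k1 ∈ Finset.range (β + 1), ∑ k2 ∈ Finset.range (β + 1),
    Bcoef β k1 k2 η τ ξ * gs (((β : ℝ) - k1) * ξ) (((β : ℝ) - k2) * ξ) h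

/-!
Substituting `θ = exp (h * x)` turns `gs β1 β2 h` into `∫ x, gsIntegrand β1 β2 h x`, where the
integrand is jointly continuous in `(h, x)` and at `h = 0` reduces to `Γ(1 - β1 - β2) φ(x)`, so
the identity `gs β1 β2 h = ∫ x, gsIntegrand β1 β2 h x` holds on all of `[0, ∞)`. Since
`C1 ≥ exp (-h |x|)` and the Gaussian factors decay like `exp (-x ^ 2 / 2)`, the integrand is
dominated by `K exp (M |x| - x ^ 2 / 2)` uniformly for `h` in bounded intervals, and dominated
convergence gives continuity of each `gs`, hence of the finite combination `gfull`.
-/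

open Real Set ProbabilityTheory

lemma nPdf_eq_gaussianPDFReal : nPdf = gaussianPDFReal 0 1 := by
  ext x
  simp [nPdf, gaussianPDFReal, div_eq_inv_mul]

@[fun_prop]
lemma continuous_nPdf : Continuous nPdf := by
  unfold nPdf; fun_prop

lemma integrable_nPdf : Integrable nPdf :=
  nPdf_eq_gaussianPDFReal ▸ integrable_gaussianPDFReal 0 1

lemma integral_nPdf : ∫ x, nPdf x = 1 :=
  nPdf_eq_gaussianPDFReal ▸ integral_gaussianPDFReal_eq_one 0 one_ne_zero

lemma nPdf_nonneg (x : ℝ) : 0 ≤ nPdf x := by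
  rw [nPdf_eq_gaussianPDFReal]; exact gaussianPDFReal_nonneg 0 1 x

lemma nPdf_le_exp (y : ℝ) : nPdf y ≤ exp (-y ^ 2 / 2) := by
  refine div_le_self (exp_nonneg _) ?_
  rw [one_le_sqrt]
  nlinarith [pi_gt_three]

lemma nPdf_half_sub (h x : ℝ) : nPdf (h / 2 - x) = exp (h * x) * nPdf (h / 2 + x) := by
  simp only [nPdf, ← mul_div_assoc, ← exp_add]
  ring_nf

lemma nCdf_eq_measureReal (x : ℝ) : nCdf x = (gaussianReal 0 1).real (Iic x) := by
  rw [measureReal_def, gaussianReal_apply_eq_integral 0 one_ne_zero,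
    ENNReal.toReal_ofReal (setIntegral_nonneg measurableSet_Iic
      fun t _ => gaussianPDFReal_nonneg 0 1 t), nCdf, nPdf_eq_gaussianPDFReal]

lemma nCdf_nonneg (x : ℝ) : 0 ≤ nCdf x := by
  rw [nCdf_eq_measureReal]; exact measureReal_nonneg

lemma nCdf_pos (x : ℝ) : 0 < nCdf x := by
  rw [nCdf_eq_measureReal]
  refine ENNReal.toReal_pos (fun h0 => ?_) (measure_ne_top _ _)
  simpa using gaussianReal_absolutelyContinuous' 0 one_ne_zero h0

lemma nCdf_le_one (x : ℝ) : nCdf x ≤ 1 := by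
  rw [nCdf_eq_measureReal]; exact measureReal_le_one

lemma nCdf_mono : Monotone nCdf := fun x y hxy => by
  simp only [nCdf_eq_measureReal]; exact measureReal_mono (Iic_subset_Iic.2 hxy)

lemma nCdf_add_nCdf_neg (x : ℝ) : nCdf x + nCdf (-x) = 1 := by
  have hneg : (gaussianReal 0 1).real (Iic (-x)) = (gaussianReal 0 1).real (Ici x) := by
    conv_lhs => rw [← neg_zero, ← gaussianReal_map_neg]
    rw [map_measureReal_apply measurable_neg measurableSet_Iic]
    congr 1; ext t; simp
  have := nullSingletonClass_gaussianReal (μ := 0) one_ne_zero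
  rw [nCdf_eq_measureReal, nCdf_eq_measureReal, hneg, measureReal_congr Ioi_ae_eq_Ici.symm,
    ← compl_Iic, probReal_add_probReal_compl measurableSet_Iic]

@[fun_prop]
lemma continuous_nCdf : Continuous nCdf := by
  have h : ∀ x, nCdf x = nCdf 0 + ∫ t in (0 : ℝ)..x, nPdf t := fun x => by
    rw [← intervalIntegral.integral_Iic_sub_Iic integrable_nPdf.integrableOn
      integrable_nPdf.integrableOn, nCdf, nCdf, add_sub_cancel]
  rw [funext h]
  exact continuous_const.add
    (intervalIntegral.continuous_primitive (fun _ _ => integrable_nPdf.intervalIntegrable) 0)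

lemma nCdf_le_exp {l : ℝ} (hl : 0 ≤ l) (y : ℝ) : nCdf y ≤ exp (l * y + l ^ 2 / 2) := by
  have h := measure_le_le_exp_mul_mgf (μ := gaussianReal 0 1) (X := id) y (neg_nonpos.2 hl)
    (integrable_exp_mul_gaussianReal _)
  rw [mgf_id_gaussianReal, ← exp_add] at h
  rw [nCdf_eq_measureReal]
  refine h.trans_eq ?_
  simp only [NNReal.coe_one]; ring_nf

lemma integral_Ioi_zero_eq_integral_exp_mul {h : ℝ} (hh : 0 < h) (f : ℝ → ℝ) :
    ∫ θ in Ioi 0, f θ = ∫ x, h * exp (h * x) * f (exp (h * x)) := by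
  have himage : (fun x => exp (h * x)) '' univ = Ioi 0 := by
    rw [image_univ, ← range_exp]
    exact (mul_left_surjective₀ hh.ne').range_comp exp
  have hderiv (x : ℝ) : HasDerivAt (fun x => exp (h * x)) (h * exp (h * x)) x := by
    simpa [mul_comm] using ((hasDerivAt_id x).const_mul h).exp
  rw [← himage, integral_image_eq_integral_abs_deriv_smul MeasurableSet.univ
    (fun x _ => (hderiv x).hasDerivWithinAt)
    (exp_injective.comp (mul_right_injective₀ hh.ne')).injOn, Measure.restrict_univ]
  simp only [smul_eq_mul, abs_of_pos (mul_pos hh (exp_pos _))]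

noncomputable def C1Exp (h x : ℝ) : ℝ := nCdf (h / 2 + x) + exp (-(h * x)) * nCdf (h / 2 - x)

lemma C1Exp_pos (h x : ℝ) : 0 < C1Exp h x := by
  have := nCdf_pos (h / 2 + x)
  have := nCdf_pos (h / 2 - x)
  unfold C1Exp; positivity

lemma log_exp_mul_div {h : ℝ} (hh : h ≠ 0) (x : ℝ) : log (exp (h * x)) / h = x := by
  rw [log_exp, mul_div_cancel_left₀ _ hh]

lemma C1_exp_mul {h : ℝ} (hh : h ≠ 0) (x : ℝ) : C1 (exp (h * x)) h = C1Exp h x := by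
  rw [C1, log_exp_mul_div hh, C1Exp, exp_neg, one_div]

lemma C2_exp_mul {h : ℝ} (hh : h ≠ 0) (x : ℝ) :
    C2 (exp (h * x)) h = nCdf (h / 2 + x) * nCdf (h / 2 - x) / exp (h * x) ^ 2 := by
  rw [C2, log_exp_mul_div hh, nPdf_half_sub]
  field_simp
  ring

lemma C3_exp_mul {h : ℝ} (hh : h ≠ 0) (x : ℝ) :
    C3 (exp (h * x)) h = nPdf (h / 2 + x) / (h * exp (h * x)) := by
  rw [C3, log_exp_mul_div hh, nPdf_half_sub]
  field_simp
  ring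

noncomputable def gsIntegrand (β1 β2 h x : ℝ) : ℝ :=
  Gamma (1 - β1 - β2) *
    (exp (β2 * (h * x)) * nPdf (h / 2 + x) * C1Exp h x ^ (β1 + β2 - 1)
      + (1 - β1 - β2) * h * exp ((β2 - 1) * (h * x)) * nCdf (h / 2 + x) * nCdf (h / 2 - x)
        * C1Exp h x ^ (β1 + β2 - 2))

lemma gsIntegrand_zero (β1 β2 x : ℝ) : gsIntegrand β1 β2 0 x = Gamma (1 - β1 - β2) * nPdf x := by
  have hC : C1Exp 0 x = 1 := by
    simpa [C1Exp, sub_eq_add_neg] using nCdf_add_nCdf_neg x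
  simp [gsIntegrand, hC]

lemma gs_eq_integral_gsIntegrand {β1 β2 h : ℝ} (hs : β1 + β2 ≠ 1) (hh : 0 ≤ h) :
    gs β1 β2 h = ∫ x, gsIntegrand β1 β2 h x := by
  rcases hh.eq_or_lt with rfl | hpos
  · simp [gs, gsIntegrand_zero, integral_const_mul, integral_nPdf]
  have hGamma : Gamma (2 - β1 - β2) = (1 - β1 - β2) * Gamma (1 - β1 - β2) := by
    rw [show 2 - β1 - β2 = (1 - β1 - β2) + 1 by ring, Gamma_add_one (by contrapose! hs; linarith)]
  rw [gs, if_neg hpos.ne', integral_Ioi_zero_eq_integral_exp_mul hpos]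
  congr 1 with x
  have hE := exp_pos (h * x)
  rw [C1_exp_mul hpos.ne', C2_exp_mul hpos.ne', C3_exp_mul hpos.ne', hGamma, gsIntegrand,
    rpow_def_of_pos hE, log_exp, mul_comm (h * x), sub_one_mul, exp_sub]
  field_simp
  ring

-- Both weights `1` and `exp (-(h * x))` are at least `exp (-(h * |x|))`, and for `h ≥ 0`
-- the two normal CDF values sum to at least `nCdf y + nCdf (-y) = 1`.
lemma exp_neg_mul_abs_le_C1Exp {h : ℝ} (hh : 0 ≤ h) (x : ℝ) : exp (-(h * |x|)) ≤ C1Exp h x := by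
  have hle_one : exp (-(h * |x|)) ≤ 1 := exp_le_one_iff.2 (by nlinarith [abs_nonneg x])
  have hle_exp : exp (-(h * |x|)) ≤ exp (-(h * x)) :=
    exp_le_exp.2 (neg_le_neg (mul_le_mul_of_nonneg_left (le_abs_self x) hh))
  have hmono : nCdf (-(h / 2 + x)) ≤ nCdf (h / 2 - x) := nCdf_mono (by linarith)
  have hsum := nCdf_add_nCdf_neg (h / 2 + x)
  unfold C1Exp
  nlinarith [mul_le_mul_of_nonneg_right hle_one (nCdf_nonneg (h / 2 + x)),
    mul_le_mul_of_nonneg_right hle_exp (nCdf_nonneg (h / 2 - x)),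
    mul_le_mul_of_nonneg_left hmono (exp_pos (-(h * |x|))).le]

lemma C1Exp_rpow_le {h e : ℝ} (hh : 0 ≤ h) (x : ℝ) (he : e ≤ 0) :
    C1Exp h x ^ e ≤ exp (-e * (h * |x|)) := by
  calc C1Exp h x ^ e ≤ exp (-(h * |x|)) ^ e :=
        rpow_le_rpow_of_nonpos (exp_pos _) (exp_neg_mul_abs_le_C1Exp hh x) he
    _ = exp (-e * (h * |x|)) := by rw [← exp_mul]; ring_nf

lemma nPdf_half_add_le {h : ℝ} (hh : 0 ≤ h) (x : ℝ) :
    nPdf (h / 2 + x) ≤ exp (h * |x| / 2 - x ^ 2 / 2) :=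
  (nPdf_le_exp _).trans <| exp_le_exp.2 <| by
    nlinarith [mul_le_mul_of_nonneg_left (neg_le_abs x) hh, sq_nonneg h]

lemma nCdf_mul_nCdf_le (h x : ℝ) :
    nCdf (h / 2 + x) * nCdf (h / 2 - x) ≤ exp (h * |x| / 2 - x ^ 2 / 2) := by
  have hle : nCdf (h / 2 + x) * nCdf (h / 2 - x) ≤ nCdf (h / 2 - |x|) := by
    rcases abs_cases x with ⟨hx, _⟩ | ⟨hx, _⟩ <;> rw [hx]
    · exact mul_le_of_le_one_left (nCdf_nonneg _) (nCdf_le_one _)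
    · rw [sub_neg_eq_add]; exact mul_le_of_le_one_right (nCdf_nonneg _) (nCdf_le_one _)
  -- Chernoff with the `x`-dependent parameter `|x|` recovers a Gaussian tail
  refine hle.trans ((nCdf_le_exp (abs_nonneg x) _).trans_eq ?_)
  rw [← sq_abs x]; ring_nf

lemma mul_mul_le_abs_mul_mul_abs {h : ℝ} (hh : 0 ≤ h) (c x : ℝ) :
    c * (h * x) ≤ |c| * (h * |x|) :=
  calc c * (h * x) ≤ |c * (h * x)| := le_abs_self _
    _ = |c| * (h * |x|) := by rw [abs_mul, abs_mul, abs_of_nonneg hh]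

section Domination

variable {β1 β2 b h : ℝ} (hs : β1 + β2 < 1) (hh : 0 ≤ h) (hhb : h ≤ b) (x : ℝ)
include hs hh hhb

lemma gsIntegrand_pdfTerm_le :
    exp (β2 * (h * x)) * nPdf (h / 2 + x) * C1Exp h x ^ (β1 + β2 - 1)
      ≤ exp ((|β2| + 4 - β1 - β2) * b * |x| - x ^ 2 / 2) := by
  have hM : 0 ≤ |β2| + 4 - β1 - β2 := by linarith [abs_nonneg β2]
  have hu : h * |x| ≤ b * |x| := mul_le_mul_of_nonneg_right hhb (abs_nonneg x)
  calc _ ≤ exp (β2 * (h * x)) * exp (h * |x| / 2 - x ^ 2 / 2)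
        * exp (-(β1 + β2 - 1) * (h * |x|)) := by
        gcongr
        · exact (rpow_pos_of_pos (C1Exp_pos h x) _).le
        · exact nPdf_half_add_le hh x
        · exact C1Exp_rpow_le hh x (by linarith)
    _ ≤ _ := by
        rw [← exp_add, ← exp_add]
        exact exp_le_exp.2 (by nlinarith [mul_mul_le_abs_mul_mul_abs hh β2 x,
          mul_le_mul_of_nonneg_left hu hM, mul_nonneg hh (abs_nonneg x)])

lemma gsIntegrand_cdfTerm_le :
    exp ((β2 - 1) * (h * x)) * (nCdf (h / 2 + x) * nCdf (h / 2 - x)) * C1Exp h x ^ (β1 + β2 - 2)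
      ≤ exp ((|β2| + 4 - β1 - β2) * b * |x| - x ^ 2 / 2) := by
  have hM : 0 ≤ |β2| + 4 - β1 - β2 := by linarith [abs_nonneg β2]
  have hu : h * |x| ≤ b * |x| := mul_le_mul_of_nonneg_right hhb (abs_nonneg x)
  have habs : |β2 - 1| ≤ |β2| + 1 := by simpa using abs_sub β2 1
  calc _ ≤ exp ((β2 - 1) * (h * x)) * exp (h * |x| / 2 - x ^ 2 / 2)
        * exp (-(β1 + β2 - 2) * (h * |x|)) := by
        gcongr
        · exact (rpow_pos_of_pos (C1Exp_pos h x) _).le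
        · exact nCdf_mul_nCdf_le h x
        · exact C1Exp_rpow_le hh x (by linarith)
    _ ≤ _ := by
        rw [← exp_add, ← exp_add]
        exact exp_le_exp.2 (by nlinarith [mul_mul_le_abs_mul_mul_abs hh (β2 - 1) x,
          mul_le_mul_of_nonneg_left hu hM, mul_nonneg hh (abs_nonneg x),
          mul_le_mul_of_nonneg_right habs (mul_nonneg hh (abs_nonneg x))])

lemma norm_gsIntegrand_le :
    ‖gsIntegrand β1 β2 h x‖ ≤ |Gamma (1 - β1 - β2)| * (1 + (1 - β1 - β2) * b)
      * exp ((|β2| + 4 - β1 - β2) * b * |x| - x ^ 2 / 2) := by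
  have hs' : 0 ≤ 1 - β1 - β2 := by linarith
  have := nPdf_nonneg (h / 2 + x)
  have := nCdf_nonneg (h / 2 + x)
  have := nCdf_nonneg (h / 2 - x)
  have := C1Exp_pos h x
  have hcdf : (1 - β1 - β2) * h * (exp ((β2 - 1) * (h * x))
        * (nCdf (h / 2 + x) * nCdf (h / 2 - x)) * C1Exp h x ^ (β1 + β2 - 2))
      ≤ (1 - β1 - β2) * b * exp ((|β2| + 4 - β1 - β2) * b * |x| - x ^ 2 / 2) :=
    mul_le_mul (by gcongr) (gsIntegrand_cdfTerm_le hs hh hhb x) (by positivity)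
      (mul_nonneg hs' (hh.trans hhb))
  rw [gsIntegrand, norm_mul, Real.norm_eq_abs, Real.norm_eq_abs,
    mul_assoc |Gamma (1 - β1 - β2)|]
  refine mul_le_mul_of_nonneg_left ((abs_of_nonneg ?_).trans_le ?_) (abs_nonneg _)
  · positivity
  · linarith [gsIntegrand_pdfTerm_le hs hh hhb x]

end Domination

lemma integrable_exp_mul_abs_sub_sq (c : ℝ) :
    Integrable fun x : ℝ => exp (c * |x| - x ^ 2 / 2) := by
  refine ((integrable_exp_neg_mul_sq (by norm_num : (0 : ℝ) < 1 / 4)).const_mul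
    (exp (c ^ 2))).mono' (by fun_prop) (ae_of_all _ fun x => ?_)
  rw [norm_of_nonneg (exp_pos _).le, ← exp_add]
  exact exp_le_exp.2 (by nlinarith [sq_nonneg (|x| - 2 * c), sq_abs x])

lemma continuous_gsIntegrand (β1 β2 : ℝ) :
    Continuous fun p : ℝ × ℝ => gsIntegrand β1 β2 p.1 p.2 := by
  have hC : Continuous fun p : ℝ × ℝ => C1Exp p.1 p.2 := by unfold C1Exp; fun_prop
  have hC1 := hC.rpow_const (p := β1 + β2 - 1) fun p => Or.inl (C1Exp_pos p.1 p.2).ne'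
  have hC2 := hC.rpow_const (p := β1 + β2 - 2) fun p => Or.inl (C1Exp_pos p.1 p.2).ne'
  unfold gsIntegrand
  fun_prop

lemma continuousOn_integral_gsIntegrand {β1 β2 : ℝ} (hs : β1 + β2 < 1) :
    ContinuousOn (fun h => ∫ x, gsIntegrand β1 β2 h x) (Ici 0) := by
  refine continuousOn_of_locally_continuousOn fun h₀ _ =>
    ⟨Iio (h₀ + 1), isOpen_Iio, lt_add_one h₀, ?_⟩
  refine continuousOn_of_dominated (fun h _ =>
      (continuous_gsIntegrand β1 β2 |>.comp (Continuous.prodMk_right h)).aestronglyMeasurable)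
    (fun h hh => ae_of_all _ (norm_gsIntegrand_le hs hh.1 hh.2.le))
    ((integrable_exp_mul_abs_sub_sq _).const_mul _)
    (ae_of_all _ fun x =>
      (continuous_gsIntegrand β1 β2 |>.comp (Continuous.prodMk_left x)).continuousOn)

lemma continuousOn_gs {β1 β2 : ℝ} (hs : β1 + β2 < 1) : ContinuousOn (gs β1 β2) (Ici 0) :=
  (continuousOn_integral_gsIntegrand hs).congr fun _ hh => gs_eq_integral_gsIntegrand hs.ne hh

lemma sub_mul_lt_half {ξ : ℝ} {β k : ℕ} (hβξ : (β : ℝ) * ξ < 1 / 2) (hk : k ≤ β) :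
    ((β : ℝ) - k) * ξ < 1 / 2 := by
  have hk' : (k : ℝ) ≤ β := Nat.cast_le.2 hk
  rcases le_total ξ 0 with hξ | hξ
  · nlinarith
  · nlinarith [(Nat.cast_nonneg k : (0 : ℝ) ≤ k)]

lemma gfull_zero (β : ℕ) (η τ ξ : ℝ) :
    gfull β η τ ξ 0 = ∑ k1 ∈ Finset.range (β + 1), ∑ k2 ∈ Finset.range (β + 1),
      Bcoef β k1 k2 η τ ξ * Gamma (1 - ξ * (2 * (β : ℝ) - k1 - k2)) := by
  refine Finset.sum_congr rfl fun k1 _ => Finset.sum_congr rfl fun k2 _ => ?_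
  rw [gs, if_pos rfl]
  ring_nf

lemma continuousOn_gfull {β : ℕ} {ξ : ℝ} (η τ : ℝ) (hβξ : (β : ℝ) * ξ < 1 / 2) :
    ContinuousOn (gfull β η τ ξ) (Ici 0) := by
  have hlt {k : ℕ} (hk : k ∈ Finset.range (β + 1)) : ((β : ℝ) - k) * ξ < 1 / 2 :=
    sub_mul_lt_half hβξ (Finset.mem_range_succ_iff.1 hk)
  exact continuousOn_finsetSum _ fun k1 hk1 => continuousOn_finsetSum _ fun k2 hk2 =>
    continuousOn_const.mul (continuousOn_gs (by linarith [hlt hk1, hlt hk2]))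

theorem stmt8_general (η τ ξ : ℝ)
    (β : ℕ) (hβξ : (β : ℝ) * ξ < 1 / 2) :
    Filter.Tendsto (gfull β η τ ξ) (nhdsWithin 0 (Set.Ioi 0))
      (nhds (∑ k1 ∈ Finset.range (β + 1), ∑ k2 ∈ Finset.range (β + 1),
        Bcoef β k1 k2 η τ ξ * Real.Gamma (1 - ξ * (2 * (β : ℝ) - k1 - k2)))) ∧
    (∑ k1 ∈ Finset.range (β + 1), ∑ k2 ∈ Finset.range (β + 1),
        Bcoef β k1 k2 η τ ξ * Real.Gamma (1 - ξ * (2 * (β : ℝ) - k1 - k2)))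
      = gfull β η τ ξ 0 ∧
    ContinuousOn (gfull β η τ ξ) (Set.Ici 0) := by
  have hcont := continuousOn_gfull η τ hβξ
  rw [← gfull_zero]
  exact ⟨(hcont 0 self_mem_Ici).tendsto.mono_left (nhdsWithin_mono _ Ioi_subset_Ici_self),
    rfl, hcont⟩

/-- `g_{β,η,τ,ξ}(h) → Σ Σ B_{k1,k2} Γ(1 - ξ(2β - k1 - k2))` as `h → 0+`, this limit equals
`g_{β,η,τ,ξ}(0)`, and `g_{β,η,τ,ξ}` is continuous on `[0,∞)`. -/
theorem stmt8 (η τ ξ : ℝ) (hτ : 0 < τ) (hξ : ξ ≠ 0)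
    (β : ℕ) (hβ : 0 < β) (hβξ : (β : ℝ) * ξ < 1 / 2) :
    Filter.Tendsto (gfull β η τ ξ) (nhdsWithin 0 (Set.Ioi 0))
      (nhds (∑ k1 ∈ Finset.range (β + 1), ∑ k2 ∈ Finset.range (β + 1),
        Bcoef β k1 k2 η τ ξ * Real.Gamma (1 - ξ * (2 * (β : ℝ) - k1 - k2)))) ∧
    (∑ k1 ∈ Finset.range (β + 1), ∑ k2 ∈ Finset.range (β + 1),
        Bcoef β k1 k2 η τ ξ * Real.Gamma (1 - ξ * (2 * (β : ℝ) - k1 - k2)))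
      = gfull β η τ ξ 0 ∧
    ContinuousOn (gfull β η τ ξ) (Set.Ici 0) :=
  stmt8_general η τ ξ β hβξ
end

section
/- Let (X1, X2) be a random vector with values in (0,∞)² whose margins are standard Fréchet and whose joint CDF is P(X1 ≤ z1, X2 ≤ z2) = exp(−V(z1, z2)) for z1, z2 > 0, where V : (0,∞)² → [0,∞) is continuous. Let η ∈ ℝ, τ > 0 and β a positive integer. For ξ ≠ 0 set Z_ξ(i) = η + τ(X_i^ξ − 1)/ξ and set Z_0(i) = η + τ log(X_i), i = 1, 2. Then for all ξ ≠ 0 sufficiently close to 0 (more precisely, all ξ such that 2βξ(1+ε) < 1 for some ε > 0) the covariance Cov(Z_ξ(1)^β, Z_ξ(2)^β) is finite, and lim_{ξ → 0} Cov(Z_ξ(1)^β, Z_ξ(2)^β) = Cov(Z_0(1)^β, Z_0(2)^β). -/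
open MeasureTheory

/-- Covariance of two square-integrable real random variables:
`Cov(U,V) = E[UV] - E[U]E[V]`. -/
noncomputable def covar {Ω : Type*} [MeasurableSpace Ω] (P : MeasureTheory.Measure Ω)
    (U V : Ω → ℝ) : ℝ :=
  (∫ ω, U ω * V ω ∂P) - (∫ ω, U ω ∂P) * (∫ ω, V ω ∂P)

def IsStdFrechet {Ω : Type*} [MeasurableSpace Ω] (P : Measure Ω) (X : Ω → ℝ) : Prop :=
  ∀ x : ℝ, P {ω | X ω ≤ x} = if 0 < x then ENNReal.ofReal (Real.exp (-1 / x)) else 0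

/-!
A standard Fréchet variable has density `exp (-1/x) / x²` on `(0, ∞)`, so after `x ↦ 1/x` its
moments are Gamma integrals: `E[X^q] < ∞` for every `q < 1`.

For fixed `ξ ≠ 0`, `|Z_ξ| ≤ C · max(X^ξ, 1)`, so `Z_ξ^β ∈ L²` as soon as `2βξ < 1`, and the
covariance is finite. For `|ξ| ≤ δ` one has `|(x^ξ - 1)/ξ| ≤ exp (2δ|log x|) / δ`, so
`(Z_ξ^β)² ≤ C · exp (4βδ|log X|) ≤ C (X^{4βδ} + X^{-4βδ})`, uniformly in `ξ`; this is integrable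
once `4βδ < 1`. Since `|uv| ≤ (u² + v²)/2`, dominated convergence then applies to the means and
to the mixed moment.
-/

open Real Set Filter Topology

-- `expNegInvGlue` is the standard Fréchet distribution function.
noncomputable def frechetPDF (x : ℝ) : ℝ := x⁻¹ ^ 2 * expNegInvGlue x

theorem hasDerivAt_expNegInvGlue (x : ℝ) : HasDerivAt expNegInvGlue (frechetPDF x) x := by
  simpa [frechetPDF] using expNegInvGlue.hasDerivAt_polynomial_eval_inv_mul 1 x

theorem frechetPDF_nonneg (x : ℝ) : 0 ≤ frechetPDF x :=
  mul_nonneg (sq_nonneg _) (expNegInvGlue.nonneg x)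

theorem frechetPDF_of_nonpos {x : ℝ} (hx : x ≤ 0) : frechetPDF x = 0 := by
  simp [frechetPDF, expNegInvGlue.zero_of_nonpos hx]

theorem measurable_frechetPDF : Measurable frechetPDF :=
  (measurable_inv.pow_const 2).mul (expNegInvGlue.contDiff (n := 0)).continuous.measurable

theorem integrable_rpow_mul_frechetPDF {q : ℝ} (hq : q < 1) :
    Integrable (fun x => x ^ q * frechetPDF x) := by
  refine IntegrableOn.integrable_of_forall_notMem_eq_zero (s := Ioi 0) ?_
    fun x hx => by rw [frechetPDF_of_nonpos (not_lt.1 hx), mul_zero]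
  have hgamma : IntegrableOn (fun y => exp (-y) * y ^ (-q)) (Ioi 0) := by
    simpa using GammaIntegral_convergent (s := 1 - q) (by linarith)
  refine ((integrableOn_Ioi_comp_rpow_iff' _ (p := -1) (by norm_num)).2 hgamma).congr_fun
    (fun x (hx : 0 < x) => ?_) measurableSet_Ioi
  simp only [smul_eq_mul, frechetPDF, expNegInvGlue, not_le.2 hx, if_false]
  rw [rpow_neg_one, inv_rpow hx.le, rpow_neg hx.le, inv_inv, show (-1 : ℝ) - 1 = -2 by norm_num,
    rpow_neg hx.le, show (2 : ℝ) = (2 : ℕ) by norm_num, rpow_natCast, inv_pow]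
  ring

noncomputable def frechetMeasure : Measure ℝ :=
  volume.withDensity fun x => ENNReal.ofReal (frechetPDF x)

theorem frechetMeasure_Iic (a : ℝ) :
    frechetMeasure (Iic a) = ENNReal.ofReal (expNegInvGlue a) := by
  have hint : Integrable frechetPDF := by
    simpa using integrable_rpow_mul_frechetPDF (q := 0) one_pos
  rw [frechetMeasure, withDensity_apply _ measurableSet_Iic,
    ← ofReal_integral_eq_lintegral_ofReal hint.integrableOn (ae_of_all _ frechetPDF_nonneg),
    integral_Iic_of_hasDerivAt_of_tendsto' (fun x _ => hasDerivAt_expNegInvGlue x)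
      hint.integrableOn (m := 0), sub_zero]
  exact tendsto_const_nhds.congr' <| (eventually_le_atBot 0).mono
    fun x hx => (expNegInvGlue.zero_of_nonpos hx).symm

theorem integrable_rpow_frechetMeasure {q : ℝ} (hq : q < 1) :
    Integrable (fun x : ℝ => x ^ q) frechetMeasure := by
  rw [frechetMeasure, integrable_withDensity_iff measurable_frechetPDF.ennreal_ofReal
    (ae_of_all _ fun _ => ENNReal.ofReal_lt_top)]
  simpa only [ENNReal.toReal_ofReal (frechetPDF_nonneg _)] using integrable_rpow_mul_frechetPDF hq

theorem abs_exp_sub_one_le_abs_mul_exp_abs (t : ℝ) : |exp t - 1| ≤ |t| * exp |t| := by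
  rcases le_or_gt 0 t with h | h
  · rw [abs_of_nonneg h, abs_of_nonneg (sub_nonneg.2 (one_le_exp h))]
    have : exp t * exp (-t) = 1 := by rw [← exp_add, add_neg_cancel, exp_zero]
    nlinarith [add_one_le_exp (-t), exp_pos t]
  · rw [abs_of_neg h, abs_of_nonpos (sub_nonpos.2 (exp_lt_one_iff.2 h).le)]
    nlinarith [add_one_le_exp t, one_le_exp (neg_nonneg.2 h.le)]

theorem abs_le_exp_mul_abs_div {δ : ℝ} (hδ : 0 < δ) (t : ℝ) : |t| ≤ exp (δ * |t|) / δ := by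
  rw [le_div_iff₀ hδ]
  linarith [add_one_le_exp (δ * |t|)]

theorem exp_mul_abs_log_le {x : ℝ} (hx : 0 < x) (c : ℝ) : exp (c * |log x|) ≤ x ^ c + x ^ (-c) := by
  rcases le_total 0 (log x) with h | h
  · rw [abs_of_nonneg h, rpow_def_of_pos hx, mul_comm]
    linarith [rpow_pos_of_pos hx (-c)]
  · rw [abs_of_nonpos h, rpow_def_of_pos hx (-c), mul_comm (log x), neg_mul, ← mul_neg]
    linarith [rpow_pos_of_pos hx c]

theorem abs_rpow_sub_one_div_le_exp {x δ ξ : ℝ} (hx : 0 < x) (hδ : 0 < δ) (hξ : |ξ| ≤ δ) :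
    |(x ^ ξ - 1) / ξ| ≤ exp (2 * δ * |log x|) / δ := by
  rcases eq_or_ne ξ 0 with rfl | hξ0
  · rw [div_zero, abs_zero]; positivity
  rw [abs_div, div_le_iff₀ (abs_pos.2 hξ0), rpow_def_of_pos hx]
  calc |exp (log x * ξ) - 1| ≤ |log x * ξ| * exp |log x * ξ| :=
        abs_exp_sub_one_le_abs_mul_exp_abs _
    _ ≤ |log x| * |ξ| * exp (δ * |log x|) := by
        rw [abs_mul, mul_comm δ]; gcongr
    _ ≤ exp (δ * |log x|) / δ * |ξ| * exp (δ * |log x|) := by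
        gcongr; exact abs_le_exp_mul_abs_div hδ _
    _ = exp (2 * δ * |log x|) / δ * |ξ| := by
        rw [show 2 * δ * |log x| = δ * |log x| + δ * |log x| by ring, exp_add]; ring

theorem abs_rpow_sub_one_div_le_max {x : ℝ} (hx : 0 < x) (ξ : ℝ) :
    |(x ^ ξ - 1) / ξ| ≤ max (x ^ ξ) 1 / |ξ| := by
  rw [abs_div]
  gcongr
  have := rpow_pos_of_pos hx ξ
  exact abs_sub_le_iff.2 ⟨by linarith [le_max_left (x ^ ξ) 1], by linarith [le_max_right (x ^ ξ) 1]⟩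

theorem abs_add_mul_le_of_abs_le {η τ u d E : ℝ} (hE : 1 ≤ E) (hu : |u| ≤ E / d) :
    |η + τ * u| ≤ (|η| + |τ| / d) * E :=
  calc |η + τ * u| ≤ |η| + |τ| * |u| := by rw [← abs_mul]; exact abs_add_le _ _
    _ ≤ |η| * E + |τ| * (E / d) := by gcongr; exact le_mul_of_one_le_right (abs_nonneg η) hE
    _ = (|η| + |τ| / d) * E := by ring

theorem sq_pow_le_of_abs_le {z B : ℝ} (h : |z| ≤ B) (n : ℕ) : (z ^ n) ^ 2 ≤ B ^ (2 * n) := by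
  rw [← pow_mul, mul_comm, ← Even.pow_abs ⟨n, two_mul n⟩]
  exact pow_le_pow_left₀ (abs_nonneg z) h _

/-- Maps a standard Fréchet variable to one with law GEV(η, τ, ξ). At `ξ = 0` the formula is junk
(`/ 0 = 0`); the Gumbel case is the limit `η + τ * log x`. -/
noncomputable def gevTransform (η τ ξ x : ℝ) : ℝ := η + τ * (x ^ ξ - 1) / ξ

theorem tendsto_gevTransform {x : ℝ} (hx : 0 < x) (η τ : ℝ) :
    Tendsto (fun ξ => gevTransform η τ ξ x) (𝓝[≠] 0) (𝓝 (η + τ * log x)) := by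
  have hslope := hasDerivAt_iff_tendsto_slope.1 (hasStrictDerivAt_const_rpow hx 0).hasDerivAt
  rw [rpow_zero, one_mul] at hslope
  refine ((hslope.const_mul τ).const_add η).congr fun ξ => ?_
  simp [gevTransform, slope_def_field, mul_div_assoc]

theorem Measurable.gevTransform_pow {Ω : Type*} [MeasurableSpace Ω] {X : Ω → ℝ}
    (hX : Measurable X) (η τ ξ : ℝ) (n : ℕ) : Measurable fun ω => gevTransform η τ ξ (X ω) ^ n := by
  unfold gevTransform; fun_prop

theorem sq_gevTransform_pow_le_max {x ξ : ℝ} (hx : 0 < x) (η τ : ℝ) (n : ℕ) :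
    (gevTransform η τ ξ x ^ n) ^ 2 ≤ (|η| + |τ| / |ξ|) ^ (2 * n) * (x ^ (2 * n * ξ) + 1) := by
  have h := abs_add_mul_le_of_abs_le (η := η) (τ := τ) (le_max_right _ _)
    (abs_rpow_sub_one_div_le_max hx ξ)
  rw [← mul_div_assoc] at h
  refine (sq_pow_le_of_abs_le h n).trans ?_
  rw [mul_pow]
  gcongr
  rw [show (2 * n * ξ : ℝ) = ξ * ((2 * n : ℕ) : ℝ) by push_cast; ring, rpow_mul_natCast hx.le]
  rcases le_total (x ^ ξ) 1 with h1 | h1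
  · rw [max_eq_right h1, one_pow]; linarith [pow_nonneg (rpow_pos_of_pos hx ξ).le (2 * n)]
  · rw [max_eq_left h1]; linarith

theorem sq_gevTransform_pow_le_exp {x δ ξ : ℝ} (hx : 0 < x) (hδ : 0 < δ) (hξ : |ξ| ≤ δ)
    (η τ : ℝ) (n : ℕ) :
    (gevTransform η τ ξ x ^ n) ^ 2 ≤ (|η| + |τ| / δ) ^ (2 * n) * exp (4 * n * δ * |log x|) := by
  have h := abs_add_mul_le_of_abs_le (η := η) (τ := τ) (one_le_exp (by positivity))
    (abs_rpow_sub_one_div_le_exp hx hδ hξ)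
  rw [← mul_div_assoc] at h
  refine (sq_pow_le_of_abs_le h n).trans_eq ?_
  rw [mul_pow, ← exp_nat_mul]
  push_cast; ring_nf

namespace IsStdFrechet

variable {Ω : Type*} [MeasurableSpace Ω] {P : Measure Ω} {X : Ω → ℝ}

theorem measure_le_eq (hF : IsStdFrechet P X) (x : ℝ) :
    P {ω | X ω ≤ x} = ENNReal.ofReal (expNegInvGlue x) := by
  rcases le_or_gt x 0 with h | h
  · simp [hF x, not_lt.2 h, expNegInvGlue.zero_of_nonpos h]
  · rw [hF x, if_pos h, expNegInvGlue, if_neg (not_le.2 h), neg_div, one_div]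

theorem ae_pos (hF : IsStdFrechet P X) : ∀ᵐ ω ∂P, 0 < X ω := by
  simpa [ae_iff] using hF 0

variable [IsFiniteMeasure P]

theorem map_eq (hF : IsStdFrechet P X) (hX : Measurable X) : P.map X = frechetMeasure :=
  Measure.ext_of_Iic _ _ fun a => by
    rw [Measure.map_apply hX measurableSet_Iic, frechetMeasure_Iic]; exact hF.measure_le_eq a

theorem integrable_rpow (hF : IsStdFrechet P X) (hX : Measurable X) {q : ℝ} (hq : q < 1) :
    Integrable (fun ω => X ω ^ q) P := by
  have h := integrable_rpow_frechetMeasure hq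
  rw [← hF.map_eq hX] at h
  exact h.comp_measurable hX

theorem integrable_exp_mul_abs_log (hF : IsStdFrechet P X) (hX : Measurable X) {c : ℝ}
    (hc0 : 0 ≤ c) (hc : c < 1) : Integrable (fun ω => exp (c * |log (X ω)|)) P := by
  refine Integrable.mono'
    ((hF.integrable_rpow hX hc).add (hF.integrable_rpow hX (q := -c) (by linarith)))
    (by fun_prop : Measurable _).aestronglyMeasurable ?_
  filter_upwards [hF.ae_pos] with ω hω
  rw [norm_of_nonneg (exp_pos _).le]
  exact exp_mul_abs_log_le hω c

theorem memLp_gevTransform_pow (hF : IsStdFrechet P X) (hX : Measurable X) (η τ : ℝ) {ξ : ℝ}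
    {n : ℕ} (h : 2 * n * ξ < 1) : MemLp (fun ω => gevTransform η τ ξ (X ω) ^ n) 2 P := by
  have hmeas := (hX.gevTransform_pow η τ ξ n).aestronglyMeasurable (μ := P)
  refine (memLp_two_iff_integrable_sq hmeas).2 <| Integrable.mono'
    (g := fun ω => (|η| + |τ| / |ξ|) ^ (2 * n) * (X ω ^ (2 * n * ξ) + 1))
    (((hF.integrable_rpow hX h).add (integrable_const 1)).const_mul _) (hmeas.pow 2) ?_
  filter_upwards [hF.ae_pos] with ω hω
  rw [norm_of_nonneg (sq_nonneg _)]
  exact sq_gevTransform_pow_le_max hω η τ n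

theorem exists_sq_gevTransform_pow_le (hF : IsStdFrechet P X) (hX : Measurable X)
    (η τ : ℝ) (n : ℕ) : ∃ G : Ω → ℝ, Integrable G P ∧
      ∀ᶠ ξ in 𝓝 0, ∀ᵐ ω ∂P, (gevTransform η τ ξ (X ω) ^ n) ^ 2 ≤ G ω := by
  set δ : ℝ := 1 / (4 * n + 1)
  have hδ : 0 < δ := by positivity
  have hnδ : 4 * n * δ < 1 := by
    rw [show 4 * n * δ = 4 * n / (4 * n + 1) by ring, div_lt_one (by positivity)]
    linarith
  refine ⟨fun ω => (|η| + |τ| / δ) ^ (2 * n) * exp (4 * n * δ * |log (X ω)|),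
    (hF.integrable_exp_mul_abs_log hX (by positivity) hnδ).const_mul _, ?_⟩
  filter_upwards [Icc_mem_nhds (neg_neg_iff_pos.2 hδ) hδ] with ξ hξ
  filter_upwards [hF.ae_pos] with ω hω
  exact sq_gevTransform_pow_le_exp hω hδ (abs_le.2 hξ) η τ n

end IsStdFrechet

theorem tendsto_covar_of_sq_le {Ω ι : Type*} [MeasurableSpace Ω] {P : Measure Ω}
    [IsFiniteMeasure P] {l : Filter ι} [l.IsCountablyGenerated] {U V : ι → Ω → ℝ}
    {U₀ V₀ F G : Ω → ℝ} (hUm : ∀ᶠ i in l, AEStronglyMeasurable (U i) P)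
    (hVm : ∀ᶠ i in l, AEStronglyMeasurable (V i) P) (hF : Integrable F P) (hG : Integrable G P)
    (hUF : ∀ᶠ i in l, ∀ᵐ ω ∂P, U i ω ^ 2 ≤ F ω) (hVG : ∀ᶠ i in l, ∀ᵐ ω ∂P, V i ω ^ 2 ≤ G ω)
    (hU : ∀ᵐ ω ∂P, Tendsto (fun i => U i ω) l (𝓝 (U₀ ω)))
    (hV : ∀ᵐ ω ∂P, Tendsto (fun i => V i ω) l (𝓝 (V₀ ω))) :
    Tendsto (fun i => covar P (U i) (V i)) l (𝓝 (covar P U₀ V₀)) := by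
  have amgm : ∀ u v : ℝ, |u * v| ≤ (u ^ 2 + v ^ 2) / 2 := fun u v => by
    rw [abs_mul]; nlinarith [two_mul_le_add_sq |u| |v|, sq_abs u, sq_abs v]
  have mean {W : ι → Ω → ℝ} {W₀ H : Ω → ℝ} (hWm : ∀ᶠ i in l, AEStronglyMeasurable (W i) P)
      (hH : Integrable H P) (hWH : ∀ᶠ i in l, ∀ᵐ ω ∂P, W i ω ^ 2 ≤ H ω)
      (hW : ∀ᵐ ω ∂P, Tendsto (fun i => W i ω) l (𝓝 (W₀ ω))) :
      Tendsto (fun i => ∫ ω, W i ω ∂P) l (𝓝 (∫ ω, W₀ ω ∂P)) := by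
    refine tendsto_integral_filter_of_dominated_convergence (fun ω => (H ω + 1) / 2) hWm ?_
      ((hH.add (integrable_const 1)).div_const 2) hW
    filter_upwards [hWH] with i hi
    filter_upwards [hi] with ω hω
    simpa using (amgm (W i ω) 1).trans (by linarith)
  have hprod : Tendsto (fun i => ∫ ω, U i ω * V i ω ∂P) l (𝓝 (∫ ω, U₀ ω * V₀ ω ∂P)) := by
    refine tendsto_integral_filter_of_dominated_convergence (fun ω => (F ω + G ω) / 2)
      (hUm.and hVm |>.mono fun i h => h.1.mul h.2) ?_ ((hF.add hG).div_const 2)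
      (hU.and hV |>.mono fun ω h => h.1.mul h.2)
    filter_upwards [hUF, hVG] with i hUi hVi
    filter_upwards [hUi, hVi] with ω hUω hVω
    exact (amgm _ _).trans (by linarith)
  exact hprod.sub ((mean hUm hF hUF hU).mul (mean hVm hG hVG hV))

theorem stmt10_general {Ω : Type*} [MeasurableSpace Ω] (P : Measure Ω) [IsProbabilityMeasure P]
    (X1 X2 : Ω → ℝ) (hX1 : Measurable X1) (hX2 : Measurable X2)
    (hF1 : IsStdFrechet P X1) (hF2 : IsStdFrechet P X2)
    (η τ : ℝ) (β : ℕ) :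
    (∀ ξ : ℝ, ξ ≠ 0 → (∃ ε > (0 : ℝ), 2 * (β : ℝ) * ξ * (1 + ε) < 1) →
      Integrable (fun ω => (η + τ * (X1 ω ^ ξ - 1) / ξ) ^ β) P ∧
      Integrable (fun ω => (η + τ * (X2 ω ^ ξ - 1) / ξ) ^ β) P ∧
      Integrable (fun ω =>
        (η + τ * (X1 ω ^ ξ - 1) / ξ) ^ β * (η + τ * (X2 ω ^ ξ - 1) / ξ) ^ β) P) ∧
    Filter.Tendsto (fun ξ : ℝ =>
        covar P (fun ω => (η + τ * (X1 ω ^ ξ - 1) / ξ) ^ β)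
          (fun ω => (η + τ * (X2 ω ^ ξ - 1) / ξ) ^ β))
      (nhdsWithin 0 {(0 : ℝ)}ᶜ)
      (nhds (covar P (fun ω => (η + τ * Real.log (X1 ω)) ^ β)
        (fun ω => (η + τ * Real.log (X2 ω)) ^ β))) := by
  refine ⟨fun ξ _ ⟨ε, hε, hξε⟩ => ?_, ?_⟩
  · have h : 2 * β * ξ < 1 := by
      rcases le_or_gt (2 * β * ξ) 0 with h0 | h0
      · linarith
      · nlinarith
    have M1 := hF1.memLp_gevTransform_pow hX1 η τ h
    have M2 := hF2.memLp_gevTransform_pow hX2 η τ h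
    exact ⟨M1.integrable one_le_two, M2.integrable one_le_two, M1.integrable_mul M2⟩
  · obtain ⟨G1, hG1, hle1⟩ := hF1.exists_sq_gevTransform_pow_le hX1 η τ β
    obtain ⟨G2, hG2, hle2⟩ := hF2.exists_sq_gevTransform_pow_le hX2 η τ β
    exact tendsto_covar_of_sq_le
      (.of_forall fun ξ => (hX1.gevTransform_pow η τ ξ β).aestronglyMeasurable)
      (.of_forall fun ξ => (hX2.gevTransform_pow η τ ξ β).aestronglyMeasurable)
      hG1 hG2 (nhdsWithin_le_nhds hle1) (nhdsWithin_le_nhds hle2)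
      (hF1.ae_pos.mono fun ω hω => (tendsto_gevTransform hω η τ).pow β)
      (hF2.ae_pos.mono fun ω hω => (tendsto_gevTransform hω η τ).pow β)

/-- Let `(X1,X2)` be a positive random vector with standard Fréchet margins and joint CDF
`exp(-V(z1,z2))` on `(0,∞)²` with `V` continuous. For `ξ ≠ 0` set
`Z_ξ(i) = η + τ(X_i^ξ - 1)/ξ` and `Z_0(i) = η + τ log X_i`. Then for all `ξ ≠ 0` with
`2βξ(1+ε) < 1` for some `ε > 0` the covariance `Cov(Z_ξ(1)^β, Z_ξ(2)^β)` is finite, and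
`Cov(Z_ξ(1)^β, Z_ξ(2)^β) → Cov(Z_0(1)^β, Z_0(2)^β)` as `ξ → 0`. -/
theorem stmt10 {Ω : Type*} [MeasurableSpace Ω] (P : Measure Ω) [IsProbabilityMeasure P]
    (X1 X2 : Ω → ℝ) (hX1 : Measurable X1) (hX2 : Measurable X2)
    (hpos : ∀ ω, 0 < X1 ω ∧ 0 < X2 ω)
    (hF1 : IsStdFrechet P X1) (hF2 : IsStdFrechet P X2)
    (V : ℝ → ℝ → ℝ)
    (hVcont : ContinuousOn (fun p : ℝ × ℝ => V p.1 p.2) (Set.Ioi 0 ×ˢ Set.Ioi 0))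
    (hVnn : ∀ z1 > (0 : ℝ), ∀ z2 > (0 : ℝ), 0 ≤ V z1 z2)
    (hcdf : ∀ z1 > (0 : ℝ), ∀ z2 > (0 : ℝ),
      P {ω | X1 ω ≤ z1 ∧ X2 ω ≤ z2} = ENNReal.ofReal (Real.exp (-V z1 z2)))
    (η τ : ℝ) (hτ : 0 < τ) (β : ℕ) (hβ : 0 < β) :
    (∀ ξ : ℝ, ξ ≠ 0 → (∃ ε > (0 : ℝ), 2 * (β : ℝ) * ξ * (1 + ε) < 1) →
      Integrable (fun ω => (η + τ * (X1 ω ^ ξ - 1) / ξ) ^ β) P ∧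
      Integrable (fun ω => (η + τ * (X2 ω ^ ξ - 1) / ξ) ^ β) P ∧
      Integrable (fun ω =>
        (η + τ * (X1 ω ^ ξ - 1) / ξ) ^ β * (η + τ * (X2 ω ^ ξ - 1) / ξ) ^ β) P) ∧
    Filter.Tendsto (fun ξ : ℝ =>
        covar P (fun ω => (η + τ * (X1 ω ^ ξ - 1) / ξ) ^ β)
          (fun ω => (η + τ * (X2 ω ^ ξ - 1) / ξ) ^ β))
      (nhdsWithin 0 {(0 : ℝ)}ᶜ)
      (nhds (covar P (fun ω => (η + τ * Real.log (X1 ω)) ^ β)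
        (fun ω => (η + τ * Real.log (X2 ω)) ^ β))) :=
  stmt10_general P X1 X2 hX1 hX2 hF1 hF2 η τ β
end
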